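/- Let X be dense in a compact Hausdorff space cX, let dX be a compact Hausdorff space, and let φ : cX → dX be a continuous surjection restricting to a homeomorphism of X onto a dense subset of dX. Suppose X is an F_σδ subset of cX. Then X (identified with its image φ(X)) is an F_σδ subset of dX if and only if there exists a sequence (H_n) of F_σ subsets of cX such that for every y ∈ dX \ φ(X) with φ⁻¹(y) not a singleton, there exists n with X ⊆ H_n ⊆ cX \ φ⁻¹(y). -/

import Mathlib

open Set Topology Filter

/-- A set is `F_σ` if it is a countable union of closed sets. -/
def IsFSigma {X : Type*} [TopologicalSpace X] (A : Set X) : Prop :=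
  ∃ F : ℕ → Set X, (∀ n, IsClosed (F n)) ∧ A = ⋃ n, F n

/-- A set is `F_σδ` if it is a countable intersection of countable unions of closed sets. -/
def IsFSigmaDelta {X : Type*} [TopologicalSpace X] (A : Set X) : Prop :=
  ∃ F : ℕ → ℕ → Set X, (∀ n m, IsClosed (F n m)) ∧ A = ⋂ n, ⋃ m, F n m

/-!
Write `X = ⋂ₙ Gₙ` with `Gₙ` of type `F_σ` in `cX`. Images of `F_σ` sets under a continuous map
from a compact space to a Hausdorff one are `F_σ`, and `φ(X) = ⋂ₙ φ(Gₙ) ∩ ⋂ₙ φ(Hₙ)`: a point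
`y ∉ φ(X)` with a single preimage misses the `φ(Gₙ)` for which that preimage misses `Gₙ`, and one
with a larger fiber misses some `φ(Hₙ)`. Conversely, if `φ(X) = ⋂ₙ Gₙ` in `dX`, the preimages
`φ⁻¹(Gₙ)` separate `X` from every fiber outside `φ⁻¹(φ(X))`.
-/

section FSigma

variable {α β : Type*} [TopologicalSpace α] [TopologicalSpace β]

theorem IsClosed.isFSigma {A : Set α} (hA : IsClosed A) : IsFSigma A :=
  ⟨fun _ => A, fun _ => hA, (iUnion_const A).symm⟩

theorem IsFSigma.preimage {f : α → β} (hf : Continuous f) {A : Set β} (hA : IsFSigma A) :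
    IsFSigma (f ⁻¹' A) := by
  obtain ⟨F, hF, rfl⟩ := hA
  exact ⟨fun n => f ⁻¹' F n, fun n => (hF n).preimage hf, preimage_iUnion⟩

theorem IsFSigma.image [CompactSpace α] [T2Space β] {f : α → β} (hf : Continuous f)
    {A : Set α} (hA : IsFSigma A) : IsFSigma (f '' A) := by
  obtain ⟨F, hF, rfl⟩ := hA
  exact ⟨fun n => f '' F n, fun n => ((hF n).isCompact.image hf).isClosed, image_iUnion⟩

theorem isFSigmaDelta_iff_eq_iInter {A : Set α} :
    IsFSigmaDelta A ↔ ∃ G : ℕ → Set α, (∀ n, IsFSigma (G n)) ∧ A = ⋂ n, G n := by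
  constructor
  · rintro ⟨F, hF, rfl⟩
    exact ⟨fun n => ⋃ m, F n m, fun n => ⟨F n, hF n, rfl⟩, rfl⟩
  · rintro ⟨G, hG, rfl⟩
    choose F hF hGF using hG
    exact ⟨F, hF, iInter_congr hGF⟩

theorem isFSigmaDelta_iInter {G : ℕ → Set α} (hG : ∀ n, IsFSigma (G n)) :
    IsFSigmaDelta (⋂ n, G n) :=
  isFSigmaDelta_iff_eq_iInter.2 ⟨G, hG, rfl⟩

theorem IsFSigmaDelta.inter {A B : Set α} (hA : IsFSigmaDelta A) (hB : IsFSigmaDelta B) :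
    IsFSigmaDelta (A ∩ B) := by
  obtain ⟨G, hG, rfl⟩ := isFSigmaDelta_iff_eq_iInter.1 hA
  obtain ⟨G', hG', rfl⟩ := isFSigmaDelta_iff_eq_iInter.1 hB
  have hK : ∀ s, IsFSigma (Sum.elim G G' s) := Sum.forall.2 ⟨hG, hG'⟩
  have hinter :
      (⋂ n, G n) ∩ ⋂ n, G' n = ⋂ n, Sum.elim G G' (Equiv.natSumNatEquivNat.symm n) := by
    rw [Equiv.natSumNatEquivNat.symm.surjective.iInter_comp, iInter_sum]
    rfl
  rw [hinter]
  exact isFSigmaDelta_iInter fun n => hK _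

end FSigma

theorem Set.image_eq_iInter_image_inter_iInter_image {α β ι κ : Type*} [Nonempty ι]
    (φ : α → β) {X : Set α} {G : ι → Set α} {H : κ → Set α} (hXG : X = ⋂ i, G i)
    (hXH : ∀ k, X ⊆ H k)
    (hsep : ∀ y ∉ φ '' X, ¬ (φ ⁻¹' {y}).Subsingleton → ∃ k, H k ⊆ (φ ⁻¹' {y})ᶜ) :
    φ '' X = (⋂ i, φ '' G i) ∩ ⋂ k, φ '' H k := by
  refine Subset.antisymm (subset_inter ?_ (subset_iInter fun k => image_mono (hXH k))) ?_
  · exact hXG ▸ image_iInter_subset G φ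
  rintro y ⟨hyG, hyH⟩
  by_contra hy
  by_cases hfiber : (φ ⁻¹' {y}).Subsingleton
  · have hpre : ∀ i, ∃ x ∈ G i, φ x = y := fun i => mem_iInter.1 hyG i
    obtain ⟨x₀, -, hx₀⟩ := hpre (Classical.arbitrary ι)
    refine hy ⟨x₀, hXG ▸ mem_iInter.2 fun i => ?_, hx₀⟩
    obtain ⟨x, hx, hxy⟩ := hpre i
    rwa [← hfiber (mem_singleton_iff.2 hxy) (mem_singleton_iff.2 hx₀)]
  · obtain ⟨k, hk⟩ := hsep y hy hfiber
    obtain ⟨x, hx, hxy⟩ := mem_iInter.1 hyH k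
    exact hk hx hxy

section Compactification

variable {α β : Type*} [TopologicalSpace α] [TopologicalSpace β] {φ : α → β} {X : Set α}

theorem IsFSigmaDelta.exists_preimage_separating (hφ : Continuous φ)
    (h : IsFSigmaDelta (φ '' X)) :
    ∃ H : ℕ → Set α, (∀ n, IsFSigma (H n)) ∧
      ∀ y ∉ φ '' X, ∃ n, X ⊆ H n ∧ H n ⊆ (φ ⁻¹' {y})ᶜ := by
  obtain ⟨G, hG, hXG⟩ := isFSigmaDelta_iff_eq_iInter.1 h
  refine ⟨fun n => φ ⁻¹' G n, fun n => (hG n).preimage hφ, fun y hy => ?_⟩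
  obtain ⟨n, hn⟩ : ∃ n, y ∉ G n := by simpa [hXG] using hy
  refine ⟨n, image_subset_iff.1 (hXG ▸ iInter_subset G n), fun x hx hxy => hn ?_⟩
  rwa [← mem_singleton_iff.1 hxy]

theorem IsFSigmaDelta.image_of_separating [CompactSpace α] [T2Space β] (hφ : Continuous φ)
    (hX : IsFSigmaDelta X) {H : ℕ → Set α} (hH : ∀ n, IsFSigma (H n))
    (hsep : ∀ y ∉ φ '' X, ¬ (φ ⁻¹' {y}).Subsingleton →
      ∃ n, X ⊆ H n ∧ H n ⊆ (φ ⁻¹' {y})ᶜ) :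
    IsFSigmaDelta (φ '' X) := by
  classical
  obtain ⟨G, hG, hXG⟩ := isFSigmaDelta_iff_eq_iInter.1 hX
  let H' n := if X ⊆ H n then H n else univ
  have hH' : ∀ n, IsFSigma (H' n) := fun n => by
    by_cases hn : X ⊆ H n
    · simpa [H', hn] using hH n
    · simpa [H', hn] using isClosed_univ.isFSigma
  have hXH' : ∀ n, X ⊆ H' n := fun n => by
    by_cases hn : X ⊆ H n <;> simp [H', hn]
  rw [image_eq_iInter_image_inter_iInter_image φ hXG hXH' fun y hy hfiber => ?_]
  · exact (isFSigmaDelta_iInter fun n => (hG n).image hφ).inter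
      (isFSigmaDelta_iInter fun n => (hH' n).image hφ)
  obtain ⟨n, hXn, hn⟩ := hsep y hy hfiber
  exact ⟨n, by simpa [H', hXn] using hn⟩

end Compactification

theorem fSigmaDelta_in_smaller_iff_general {cX dX : Type*}
    [TopologicalSpace cX] [CompactSpace cX]
    [TopologicalSpace dX] [T2Space dX]
    (X : Set cX) (hXfsd : IsFSigmaDelta X)
    (φ : cX → dX) (hφ : Continuous φ) :
    IsFSigmaDelta (φ '' X) ↔
      ∃ H : ℕ → Set cX, (∀ n, IsFSigma (H n)) ∧
        ∀ y : dX, y ∉ φ '' X → ¬ (φ ⁻¹' {y}).Subsingleton →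
          ∃ n, X ⊆ H n ∧ H n ⊆ (φ ⁻¹' {y})ᶜ :=
  ⟨fun h => let ⟨H, hH, hsep⟩ := h.exists_preimage_separating hφ
      ⟨H, hH, fun y hy _ => hsep y hy⟩,
    fun ⟨_, hH, hsep⟩ => hXfsd.image_of_separating hφ hH hsep⟩

/-- Characterization: assuming `X` is `F_σδ` in a compactification `cX` and `dX ⪯ cX` is
witnessed by `φ`, `X` is `F_σδ` in `dX` iff there is a sequence of `F_σ` subsets of `cX`
separating `X` from every non-singleton fiber of `φ`. -/
theorem fSigmaDelta_in_smaller_iff {cX dX : Type*}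
    [TopologicalSpace cX] [CompactSpace cX] [T2Space cX]
    [TopologicalSpace dX] [CompactSpace dX] [T2Space dX]
    (X : Set cX) (hXdense : Dense X) (hXfsd : IsFSigmaDelta X)
    (φ : cX → dX) (hφ : Continuous φ) (hsurj : Function.Surjective φ)
    (hemb : IsEmbedding (fun x : X => φ x)) (hdense : Dense (φ '' X)) :
    IsFSigmaDelta (φ '' X) ↔
      ∃ H : ℕ → Set cX, (∀ n, IsFSigma (H n)) ∧
        ∀ y : dX, y ∉ φ '' X → ¬ (φ ⁻¹' {y}).Subsingleton →
          ∃ n, X ⊆ H n ∧ H n ⊆ (φ ⁻¹' {y})ᶜ :=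
  fSigmaDelta_in_smaller_iff_general X hXfsd φ hφ
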